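/- Let ξ be a nonzero algebraic integer of degree d with complex conjugates ξ_1,…,ξ_d, and for n ∈ ℕ set S_n = ξ_1^n + ⋯ + ξ_d^n. If there exists an integer p ≥ 2 such that S_{np} = S_n for all n with 1 ≤ n ≤ d, then ξ is a root of unity. -/

import Mathlib

/-!
Newton's identities express the elementary symmetric functions of a multiset of `d` numbers
through its first `d` power sums, so the hypothesis gives `∏ (X - ξᵢ ^ p) = ∏ (X - ξᵢ)`:
`ξᵢ ↦ ξᵢ ^ p` permutes the conjugates. The orbit `ξ, ξ ^ p, ξ ^ p ^ 2, …` therefore lies in a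
finite set, so `ξ ^ p ^ i = ξ ^ p ^ j` for some `i < j`, and `ξ ^ (p ^ j - p ^ i) = 1` as `ξ ≠ 0`.
-/

open Finset Polynomial

namespace Multiset

section Newton

variable {R : Type*} [CommRing R]

theorem mul_esymm_eq_sum_map_pow (s : Multiset R) (k : ℕ) :
    (k : R) * s.esymm k = (-1) ^ (k + 1) *
      ∑ a ∈ HasAntidiagonal.antidiagonal k with a.1 < k,
        (-1) ^ a.1 * s.esymm a.1 * (s.map (· ^ a.2)).sum := by
  classical
  have h := congrArg (MvPolynomial.aeval fun x : s ↦ (x : R))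
    (MvPolynomial.mul_esymm_eq_sum s R k)
  simp only [map_mul, map_sum, map_pow, map_neg, map_one, map_natCast, MvPolynomial.psum,
    MvPolynomial.aeval_X, MvPolynomial.aeval_esymm_eq_multiset_esymm, map_univ_coe] at h
  convert h using 4
  rw [← map_univ_comp_coe]
  rfl

variable [IsDomain R] [CharZero R]

theorem esymm_eq_of_sum_map_pow_eq {s t : Multiset R} {N : ℕ}
    (h : ∀ n, 1 ≤ n → n ≤ N → (s.map (· ^ n)).sum = (t.map (· ^ n)).sum) :
    ∀ k ≤ N, s.esymm k = t.esymm k := by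
  intro k
  induction k using Nat.strong_induction_on with
  | _ k ih =>
    intro hk
    rcases Nat.eq_zero_or_pos k with rfl | hk0
    · simp [esymm, powersetCard_zero_left]
    have hsum : ∑ a ∈ HasAntidiagonal.antidiagonal k with a.1 < k,
          (-1 : R) ^ a.1 * s.esymm a.1 * (s.map (· ^ a.2)).sum
        = ∑ a ∈ HasAntidiagonal.antidiagonal k with a.1 < k,
          (-1 : R) ^ a.1 * t.esymm a.1 * (t.map (· ^ a.2)).sum := by
      refine sum_congr rfl fun a ha ↦ ?_
      rw [Finset.mem_filter, HasAntidiagonal.mem_antidiagonal] at ha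
      obtain ⟨hak, hlt⟩ := ha
      rw [ih a.1 hlt (by omega), h a.2 (by omega) (by omega)]
    refine mul_left_cancel₀ (Nat.cast_ne_zero.mpr hk0.ne') ?_
    rw [mul_esymm_eq_sum_map_pow, mul_esymm_eq_sum_map_pow, hsum]

theorem eq_of_card_eq_of_sum_map_pow_eq {s t : Multiset R} (hcard : card s = card t)
    (h : ∀ n, 1 ≤ n → n ≤ card s → (s.map (· ^ n)).sum = (t.map (· ^ n)).sum) : s = t := by
  have hprod : (s.map fun a ↦ X - C a).prod = (t.map fun a ↦ X - C a).prod := by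
    rw [prod_X_sub_X_eq_sum_esymm, prod_X_sub_X_eq_sum_esymm, hcard]
    refine sum_congr rfl fun j hj ↦ ?_
    rw [Finset.mem_range] at hj
    rw [esymm_eq_of_sum_map_pow_eq h j (by omega)]
  rw [← roots_multiset_prod_X_sub_C s, hprod, roots_multiset_prod_X_sub_C]

end Newton

theorem pow_pow_mem_of_map_pow_eq_self {M : Type*} [Monoid M] {s : Multiset M} {p : ℕ}
    (hs : s.map (· ^ p) = s) {x : M} (hx : x ∈ s) (k : ℕ) : x ^ p ^ k ∈ s := by
  induction k with
  | zero => simpa using hx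
  | succ k ih =>
    rw [pow_succ, pow_mul, ← hs]
    exact mem_map_of_mem _ ih

end Multiset

theorem isOfFinOrder_of_pow_eq_pow₀ {G₀ : Type*} [GroupWithZero G₀] {x : G₀} (hx : x ≠ 0)
    {a b : ℕ} (hab : a < b) (h : x ^ a = x ^ b) : IsOfFinOrder x :=
  isOfFinOrder_iff_pow_eq_one.mpr ⟨b - a, by omega, by
    rw [pow_sub₀ x hx hab.le, ← h, mul_inv_cancel₀ (pow_ne_zero _ hx)]⟩

theorem isOfFinOrder_of_forall_pow_pow_mem {G₀ : Type*} [GroupWithZero G₀] {s : Set G₀}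
    (hs : s.Finite) {x : G₀} (hx : x ≠ 0) {p : ℕ} (hp : 2 ≤ p) (hmem : ∀ k, x ^ p ^ k ∈ s) :
    IsOfFinOrder x := by
  obtain ⟨i, j, hij, heq⟩ := hs.exists_lt_map_eq_of_forall_mem hmem
  exact isOfFinOrder_of_pow_eq_pow₀ hx (Nat.pow_lt_pow_right hp hij) heq

/-- Let `ξ` be a nonzero algebraic integer of degree `d` with complex conjugates
`ξ₁, …, ξ_d` (the roots of its minimal polynomial over `ℤ`, in `ℂ`), and set
`S n = ξ₁^n + ⋯ + ξ_d^n`.  If there is an integer `p ≥ 2` with `S (n*p) = S n` for all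
`1 ≤ n ≤ d`, then `ξ` is a root of unity. -/
theorem root_of_unity_of_powerSums_eq (ξ : ℂ) (hξ : ξ ≠ 0) (hint : IsIntegral ℤ ξ)
    (d : ℕ) (hd : d = (minpoly ℤ ξ).natDegree)
    (S : ℕ → ℂ)
    (hS : ∀ n : ℕ, S n = (((minpoly ℤ ξ).map (Int.castRingHom ℂ)).roots.map (· ^ n)).sum)
    (p : ℕ) (hp : 2 ≤ p) (hper : ∀ n : ℕ, 1 ≤ n → n ≤ d → S (n * p) = S n) :
    ∃ m : ℕ, 0 < m ∧ ξ ^ m = 1 := by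
  set roots := ((minpoly ℤ ξ).map (Int.castRingHom ℂ)).roots
  have hcard : roots.card = d :=
    hd ▸ IsAlgClosed.card_roots_map_eq_natDegree_of_injective _ (RingHom.injective_int _)
  have hξ_mem : ξ ∈ roots :=
    (mem_roots_map_of_injective (RingHom.injective_int _) (minpoly.ne_zero hint)).mpr
      (by simpa [aeval_def] using minpoly.aeval ℤ ξ)
  have hroots : roots.map (· ^ p) = roots := by
    refine Multiset.eq_of_card_eq_of_sum_map_pow_eq (Multiset.card_map _ _) fun n hn1 hn ↦ ?_
    simpa only [Multiset.map_map, Function.comp_def, ← pow_mul, mul_comm p n, ← hS] using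
      hper n hn1 (by simpa [hcard] using hn)
  exact isOfFinOrder_iff_pow_eq_one.mp <| isOfFinOrder_of_forall_pow_pow_mem
    roots.toFinset.finite_toSet hξ hp fun k ↦
      Multiset.mem_toFinset.mpr (Multiset.pow_pow_mem_of_map_pow_eq_self hroots hξ_mem k)
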